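/- arXiv:2210.05412 — 4 statements merged into one kernel-verified Lean document; each statement's English description precedes it below -/
import Mathlib

section
/- Let m ≥ 0, Q(y) = √8(m+1)y^m/(1+y^{2m+2}), and define the operator A_Q acting on functions f: (0,∞) → ℂ by A_Q f = ∂_y f - ((m+1+A_θ[Q](y))/y)·f, where A_θ[Q](y) = -2(m+1)y^{2m+2}/(1+y^{2m+2}). Then A_Q(yQ) = 0, i.e., the function y ↦ y·Q(y) lies in the kernel of A_Q. -/
/-- The `m`-equivariant Jackiw–Pi vortex profile. -/
noncomputable def Q (m : ℕ) (r : ℝ) : ℝ :=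
  Real.sqrt 8 * (m + 1) * r ^ m / (1 + r ^ (2 * m + 2))

/-- Closed-form of the angular connection component `A_θ[Q]`. -/
noncomputable def AthetaQ (m : ℕ) (y : ℝ) : ℝ :=
  -2 * (m + 1) * y ^ (2 * m + 2) / (1 + y ^ (2 * m + 2))

/-- `A_Q (yQ) = 0`: the function `y ↦ y Q(y)` lies in the kernel of
`A_Q = ∂_y - (m+1+A_θ[Q])/y`. -/
theorem stmt6 (m : ℕ) (y : ℝ) (hy : 0 < y) :
    deriv (fun t => t * Q m t) y - ((m + 1 + AthetaQ m y) / y) * (y * Q m y) = 0 := by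
  set c : ℝ := Real.sqrt 8 * (m + 1) with hc
  have hfun : (fun t : ℝ => t * Q m t)
      = fun t : ℝ => c * t ^ (m + 1) / (1 + t ^ (2 * m + 2)) := by
    funext t
    simp only [Q, hc]
    ring
  have hden : (1 : ℝ) + y ^ (2 * m + 2) ≠ 0 := by positivity
  have hnum : HasDerivAt (fun t : ℝ => c * t ^ (m + 1))
      (c * ((m + 1) * y ^ m)) y := by
    simpa using ((hasDerivAt_pow (m + 1) y).const_mul c)
  have hd : HasDerivAt (fun t : ℝ => 1 + t ^ (2 * m + 2))
      ((2 * m + 2) * y ^ (2 * m + 1)) y := by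
    simpa using ((hasDerivAt_pow (2 * m + 2) y).const_add 1)
  have hdiv := hnum.div hd hden
  have hderiv : deriv (fun t => t * Q m t) y
      = (c * ((m + 1) * y ^ m) * (1 + y ^ (2 * m + 2))
          - c * y ^ (m + 1) * ((2 * m + 2) * y ^ (2 * m + 1)))
        / (1 + y ^ (2 * m + 2)) ^ 2 := by
    rw [hfun]
    exact hdiv.deriv
  rw [hderiv]
  simp only [Q, AthetaQ]
  have hy' : y ≠ 0 := ne_of_gt hy
  field_simp
  ring
end

section
/- Let m ≥ 0, Q(y) = √8(m+1)y^m/(1+y^{2m+2}), A_θ[Q](y) = -2(m+1)y^{2m+2}/(1+y^{2m+2}), and define A_Q* f = -∂_y f - ((m+2+A_θ[Q](y))/y)·f. Then A_Q*(1/(y²Q)) = 0, i.e., the function y ↦ 1/(y²Q(y)) lies in the kernel of A_Q*. -/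
/-!
Clearing the denominator of `Q` gives `1 / (y² Q) = (y^{-(m+2)} + y^m) / (√8 (m+1))`, whose
logarithmic derivative `(m y^{2m+2} - (m+2)) / (y (1 + y^{2m+2}))` is exactly
`-(m + 2 + A_θ[Q]) / y`.
-/

lemma one_add_pow_even_pos (m : ℕ) (t : ℝ) : 0 < 1 + t ^ (2 * m + 2) :=
  add_pos_of_pos_of_nonneg one_pos (Even.pow_nonneg ⟨m + 1, by ring⟩ t)

lemma one_div_sq_mul_Q {m : ℕ} {t : ℝ} (ht : t ≠ 0) :
    1 / (t ^ 2 * Q m t) = (1 + t ^ (2 * m + 2)) / (Real.sqrt 8 * (m + 1) * t ^ (m + 2)) := by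
  have := (one_add_pow_even_pos m t).ne'
  unfold Q
  field_simp
  ring

lemma hasDerivAt_one_div_sq_mul_Q (m : ℕ) {y : ℝ} (hy : y ≠ 0) :
    HasDerivAt (fun t => 1 / (t ^ 2 * Q m t))
      ((m * y ^ (2 * m + 2) - (m + 2)) / (Real.sqrt 8 * (m + 1) * y ^ (m + 3))) y := by
  have hc : Real.sqrt 8 * (m + 1) ≠ 0 := by positivity
  have hden : Real.sqrt 8 * (m + 1) * y ^ (m + 2) ≠ 0 := by positivity
  have hclosed : HasDerivAt (fun t => (1 + t ^ (2 * m + 2)) / (Real.sqrt 8 * (m + 1) * t ^ (m + 2)))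
      (((2 * m + 2 : ℕ) * y ^ (2 * m + 1) * (Real.sqrt 8 * (m + 1) * y ^ (m + 2))
        - (1 + y ^ (2 * m + 2)) * (Real.sqrt 8 * (m + 1) * ((m + 2 : ℕ) * y ^ (m + 1))))
        / (Real.sqrt 8 * (m + 1) * y ^ (m + 2)) ^ 2) y :=
    (((hasDerivAt_pow _ y).const_add 1).div ((hasDerivAt_pow _ y).const_mul _) hden)
  have heq : (fun t => 1 / (t ^ 2 * Q m t)) =ᶠ[nhds y]
      fun t => (1 + t ^ (2 * m + 2)) / (Real.sqrt 8 * (m + 1) * t ^ (m + 2)) := by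
    filter_upwards [isOpen_ne.mem_nhds hy] with t ht using one_div_sq_mul_Q ht
  refine (hclosed.congr_of_eventuallyEq heq).congr_deriv ?_
  field_simp
  push_cast
  ring

lemma add_AthetaQ (m : ℕ) (y : ℝ) :
    m + 2 + AthetaQ m y = (m + 2 - m * y ^ (2 * m + 2)) / (1 + y ^ (2 * m + 2)) := by
  have := (one_add_pow_even_pos m y).ne'
  unfold AthetaQ
  field_simp
  ring

/-- `A_Q* (1/(y²Q)) = 0`: the function `y ↦ 1/(y²Q(y))` lies in the kernel of
`A_Q* = -∂_y - (m+2+A_θ[Q])/y`. -/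
theorem stmt7 (m : ℕ) (y : ℝ) (hy : 0 < y) :
    -deriv (fun t => 1 / (t ^ 2 * Q m t)) y
      - ((m + 2 + AthetaQ m y) / y) * (1 / (y ^ 2 * Q m y)) = 0 := by
  have hy₀ := hy.ne'
  have hc : Real.sqrt 8 * (m + 1) ≠ 0 := by positivity
  have := (one_add_pow_even_pos m y).ne'
  rw [(hasDerivAt_one_div_sq_mul_Q m hy₀).deriv, add_AthetaQ, one_div_sq_mul_Q hy₀]
  field_simp
  ring
end

section
/- Let m ≥ 1, Q(y) = √8(m+1)y^m/(1+y^{2m+2}), A_θ[Q](y) = -2(m+1)y^{2m+2}/(1+y^{2m+2}), and define the potential Ṽ_Q(y) = (m+2+A_θ[Q](y))² + (1/2)y²Q(y)². Then Ṽ_Q(y) ≥ m² for all y > 0. -/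
/-- The potential of the twice-conjugated linearized Hamiltonian `H̃_Q`. -/
noncomputable def Vtld (m : ℕ) (y : ℝ) : ℝ :=
  (m + 2 + AthetaQ m y) ^ 2 + (1 / 2) * y ^ 2 * (Q m y) ^ 2

/-!
With `s = 1 + y^(2m+2)` one has `m + 2 + A_θ[Q] = -m + 2(m+1)/s` and
`y²Q²/2 = 4(m+1)²(s-1)/s²`; the `1/s²` terms cancel and `Ṽ_Q = m² + 4(m+1)/s` exactly.
-/

lemma one_add_pow_two_mul_add_two_pos (m : ℕ) (y : ℝ) : 0 < 1 + y ^ (2 * m + 2) := by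
  have : 0 ≤ y ^ (2 * m + 2) := by
    rw [show 2 * m + 2 = 2 * (m + 1) by ring, pow_mul]
    positivity
  linarith

lemma sq_mul_Q_sq (m : ℕ) (y : ℝ) :
    y ^ 2 * Q m y ^ 2 = 8 * ((m : ℝ) + 1) ^ 2 * y ^ (2 * m + 2) / (1 + y ^ (2 * m + 2)) ^ 2 := by
  have h8 : Real.sqrt 8 ^ 2 = 8 := Real.sq_sqrt (by norm_num)
  have hpow : y ^ 2 * (y ^ m) ^ 2 = y ^ (2 * m + 2) := by ring
  rw [Q, div_pow, mul_pow, mul_pow, h8, ← mul_div_assoc, ← hpow]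
  ring

lemma sq_sub_add_eq_sq_add_div (a t : ℝ) (ht : 1 + t ≠ 0) :
    (a + 2 - 2 * (a + 1) * t / (1 + t)) ^ 2 + 4 * (a + 1) ^ 2 * t / (1 + t) ^ 2
      = a ^ 2 + 4 * (a + 1) / (1 + t) := by
  field_simp
  ring

lemma Vtld_eq (m : ℕ) (y : ℝ) :
    Vtld m y = (m : ℝ) ^ 2 + 4 * ((m : ℝ) + 1) / (1 + y ^ (2 * m + 2)) := by
  rw [← sq_sub_add_eq_sq_add_div _ _ (one_add_pow_two_mul_add_two_pos m y).ne', Vtld, AthetaQ,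
    mul_assoc (1 / 2), sq_mul_Q_sq]
  ring

theorem stmt8_general (m : ℕ) (y : ℝ) :
    (m : ℝ) ^ 2 ≤ Vtld m y := by
  rw [Vtld_eq]
  have hs := one_add_pow_two_mul_add_two_pos m y
  have hpos : 0 < 4 * ((m : ℝ) + 1) / (1 + y ^ (2 * m + 2)) := by positivity
  linarith

/-- Lower bound `Ṽ_Q ≥ m²` for `m ≥ 1` and `y > 0`. -/
theorem stmt8 (m : ℕ) (hm : 1 ≤ m) (y : ℝ) (hy : 0 < y) :
    (m : ℝ) ^ 2 ≤ Vtld m y :=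
  stmt8_general m y
end

section
/- Let m ≥ 0, Q(y) = √8(m+1)y^m/(1+y^{2m+2}), A_θ[Q](y) = -2(m+1)y^{2m+2}/(1+y^{2m+2}), and Ṽ_Q(y) = (m+2+A_θ[Q](y))² + (1/2)y²Q(y)². Then the exact identity -y·∂_y Ṽ_Q(y) = y²Q(y)² holds for all y > 0. In particular Ṽ_Q is nonincreasing in y. -/
lemma hasDerivAt_bogomolnyi_potential {A Q : ℝ → ℝ} {m y : ℝ}
    (hA : HasDerivAt A (-(1 / 2) * y * Q y ^ 2) y)
    (hQ : HasDerivAt Q ((m + A y) / y * Q y) y) :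
    HasDerivAt (fun y => (m + 2 + A y) ^ 2 + (1 / 2) * y ^ 2 * Q y ^ 2) (-(y * Q y ^ 2)) y := by
  refine (((hA.const_add (m + 2)).pow 2).add
    (((hasDerivAt_pow 2 y).const_mul (1 / 2)).mul (hQ.pow 2))).congr_deriv ?_
  simp only [Pi.pow_apply]
  field_simp
  ring

lemma hasDerivAt_AthetaQ (m : ℕ) (y : ℝ) :
    HasDerivAt (AthetaQ m) (-(1 / 2) * y * Q m y ^ 2) y := by
  have hD := (one_add_pow_two_mul_add_two_pos m y).ne'
  have hp := hasDerivAt_pow (2 * m + 2) y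
  refine ((hp.const_mul (-2 * (m + 1 : ℝ))).div (hp.const_add 1) hD).congr_deriv ?_
  simp only [Q, div_pow, mul_pow, Real.sq_sqrt (show (0 : ℝ) ≤ 8 by norm_num)]
  field_simp
  push_cast
  ring

lemma hasDerivAt_Q (m : ℕ) {y : ℝ} (hy : y ≠ 0) :
    HasDerivAt (Q m) ((m + AthetaQ m y) / y * Q m y) y := by
  have hD := (one_add_pow_two_mul_add_two_pos m y).ne'
  have hpow : HasDerivAt (· ^ m) (m * y ^ m / y) y := by
    refine (hasDerivAt_pow m y).congr_deriv ?_
    rcases m with _ | k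
    · simp
    · rw [pow_succ, Nat.add_sub_cancel, mul_div_assoc, mul_div_cancel_right₀ _ hy]
  refine ((hpow.const_mul (Real.sqrt 8 * (m + 1))).div
    ((hasDerivAt_pow (2 * m + 2) y).const_add 1) hD).congr_deriv ?_
  simp only [Q, AthetaQ]
  field_simp
  push_cast
  ring

/-- The exact repulsivity identity `-y ∂_y Ṽ_Q = y²Q²` for `y > 0`; in particular
`Ṽ_Q` is nonincreasing on `(0,∞)`. -/
theorem stmt9 (m : ℕ) :
    (∀ y : ℝ, 0 < y → -y * deriv (Vtld m) y = y ^ 2 * (Q m y) ^ 2) ∧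
    AntitoneOn (Vtld m) (Set.Ioi 0) := by
  have hV : ∀ y : ℝ, 0 < y → HasDerivAt (Vtld m) (-(y * Q m y ^ 2)) y := fun y hy =>
    hasDerivAt_bogomolnyi_potential (hasDerivAt_AthetaQ m y) (hasDerivAt_Q m hy.ne')
  refine ⟨fun y hy => by rw [(hV y hy).deriv]; ring, ?_⟩
  refine antitoneOn_of_hasDerivWithinAt_nonpos (f' := fun y => -(y * Q m y ^ 2)) (convex_Ioi 0)
    (fun y hy => (hV y hy).continuousAt.continuousWithinAt) ?_ ?_
  · simp only [interior_Ioi]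
    exact fun y hy => (hV y hy).hasDerivWithinAt
  · simp only [interior_Ioi]
    exact fun y hy => neg_nonpos.mpr (by positivity [hy.out.le])
end
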